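/- Let {S_k : k ∈ ℕ} be subsets of (0,∞), each with the Baire property and essentially unbounded in the category sense (S_k ∩ (m,∞) non-meagre for all m). Then for quasi all η > 0 (all η off a meagre set) and each k there exists an infinite set J ⊆ ℕ with nη ∈ S_k for all n ∈ J. In particular this holds if every S_k is open and unbounded. -/

import Mathlib

open Filter Set Topology

/-! If the set `B` of those `η > 0` with `n η ∉ S` for all `n ≥ N` were not meagre, then, being
Baire measurable, it would be comeagre in some interval `(a, b)` with `0 ≤ a < b`. Every
`S ∩ (n a, n b)` with `n ≥ N` is a scaled copy of a subset of `(a, b) \ B`, hence meagre; but these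
intervals cover a half-line, while `S` is not meagre near infinity. Countably many such
exceptional sets, over `N` and `k`, still form a meagre set. -/

theorem IsMeagre.image_homeomorph {X Y : Type*} [TopologicalSpace X] [TopologicalSpace Y]
    {s : Set X} (hs : IsMeagre s) (e : X ≃ₜ Y) : IsMeagre (e '' s) := by
  rw [e.image_eq_preimage_symm]
  exact hs.preimage_of_isOpenMap e.symm.continuous e.symm.isOpenMap

theorem BaireMeasurableSet.exists_isOpen_inter_nonempty_isMeagre_diff {X : Type*}
    [TopologicalSpace X] {s : Set X} (hs : BaireMeasurableSet s) (hs' : ¬IsMeagre s) :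
    ∃ u, IsOpen u ∧ (s ∩ u).Nonempty ∧ IsMeagre (u \ s) := by
  obtain ⟨u, hu, hsu⟩ := hs.residualEq_isOpen
  refine ⟨u, hu, nonempty_of_not_isMeagre fun h => hs' ?_, ?_⟩
  · filter_upwards [hsu.mem_iff, h] with x hx hx'
    simp_all
  · filter_upwards [hsu.mem_iff] with x hx
    simp [hx]

section ConstMul

variable {G₀ : Type*} [GroupWithZero G₀] [TopologicalSpace G₀] [ContinuousMul G₀]

theorem BaireMeasurableSet.preimage_const_mul {s : Set G₀} (hs : BaireMeasurableSet s) (c : G₀) :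
    BaireMeasurableSet ((c * ·) ⁻¹' s) := by
  rcases eq_or_ne c 0 with rfl | hc
  · classical
    simp only [zero_mul]
    rw [preimage_const]
    split_ifs
    exacts [isOpen_univ.baireMeasurableSet, isOpen_empty.baireMeasurableSet]
  · exact hs.preimage (Homeomorph.mulLeft₀ c hc).continuous (Homeomorph.mulLeft₀ c hc).isOpenMap

end ConstMul

section Ordered

variable {K : Type*} [Field K] [LinearOrder K] [IsStrictOrderedRing K]

theorem exists_Ioi_subset_iUnion_Ioo_nat_mul [FloorSemiring K] {a b : K} (ha : 0 ≤ a) (hab : a < b)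
    (N : ℕ) :
    ∃ M : K, Ioi M ⊆ ⋃ n ≥ N, Ioo (n * a) (n * b) := by
  have hb : 0 < b := ha.trans_lt hab
  -- past `a b / (b - a)` consecutive intervals `(n a, n b)`, `((n + 1) a, (n + 1) b)` overlap
  refine ⟨max (N * b) (a * b / (b - a)), fun y hy => ?_⟩
  obtain ⟨hNy, hy⟩ := max_lt_iff.1 hy
  rw [div_lt_iff₀ (sub_pos.2 hab)] at hy
  set n := ⌊y / b⌋₊ + 1
  have hn_gt : y / b < n := by simpa [n] using Nat.lt_floor_add_one (y / b)
  have hn_le : (n : K) ≤ y / b + 1 := by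
    simpa [n] using Nat.floor_le (div_pos ((mul_nonneg N.cast_nonneg hb.le).trans_lt hNy) hb).le
  rw [div_lt_iff₀ hb] at hn_gt
  have hNn : N ≤ n := by
    exact_mod_cast (lt_of_mul_lt_mul_right (hNy.trans hn_gt) hb.le).le
  refine mem_biUnion hNn ⟨?_, hn_gt⟩
  calc (n : K) * a ≤ (y / b + 1) * a := mul_le_mul_of_nonneg_right hn_le ha
    _ < y := by
      rw [add_mul, div_mul_eq_mul_div, div_add' _ _ _ hb.ne', div_lt_iff₀ hb]
      linarith

theorem isMeagre_inter_Ioo_mul_of_preimage_mul [TopologicalSpace K] [ContinuousMul K] {s : Set K}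
    {a b c : K} (hc : 0 ≤ c) (h : IsMeagre ((c * ·) ⁻¹' s ∩ Ioo a b)) :
    IsMeagre (s ∩ Ioo (c * a) (c * b)) := by
  rcases hc.eq_or_lt with rfl | hc
  · simp [IsMeagre.empty]
  · rw [← image_mul_left_Ioo hc, ← image_preimage_inter]
    exact h.image_homeomorph (Homeomorph.mulLeft₀ c hc.ne')

variable [FloorSemiring K] [TopologicalSpace K] [OrderTopology K] {S : Set K}

theorem exists_nat_ge_not_isMeagre_preimage_mul_inter_Ioo
    (hS : ∀ m : ℕ, ¬IsMeagre (S ∩ Ioi (m : K))) {a b : K} (ha : 0 ≤ a) (hab : a < b) (N : ℕ) :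
    ∃ n ≥ N, ¬IsMeagre (((n : K) * ·) ⁻¹' S ∩ Ioo a b) := by
  by_contra! h
  obtain ⟨M, hM⟩ := exists_Ioi_subset_iUnion_Ioo_nat_mul ha hab N
  refine hS ⌈M⌉₊ ((isMeagre_biUnion (to_countable _) fun n hn =>
    isMeagre_inter_Ioo_mul_of_preimage_mul n.cast_nonneg (h n hn)).mono ?_)
  rintro y ⟨hyS, hy⟩
  obtain ⟨n, hn, hy⟩ := mem_iUnion₂.1 (hM ((Nat.le_ceil M).trans_lt hy))
  exact mem_biUnion hn ⟨hyS, hy⟩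

theorem eventually_residual_frequently_nat_mul_mem (hS : BaireMeasurableSet S)
    (hUnb : ∀ m : ℕ, ¬IsMeagre (S ∩ Ioi (m : K))) :
    ∀ᶠ η in residual K, 0 < η → ∃ᶠ n : ℕ in atTop, (n : K) * η ∈ S := by
  have key (N : ℕ) : ∀ᶠ η in residual K, 0 < η → ∃ n ≥ N, (n : K) * η ∈ S := by
    set B := Ioi 0 ∩ ⋂ n ≥ N, (((n : K) * ·) ⁻¹' S)ᶜ
    suffices IsMeagre B by
      filter_upwards [(this : Bᶜ ∈ residual K)] with η hη hη0
      by_contra! h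
      exact hη ⟨hη0, mem_iInter₂.2 h⟩
    by_contra hB
    have hBm : BaireMeasurableSet B := isOpen_Ioi.baireMeasurableSet.inter <|
      .iInter fun n => .iInter fun _ => (hS.preimage_const_mul n).compl
    obtain ⟨u, hu, ⟨x, hxB, hxu⟩, hmeagre⟩ := hBm.exists_isOpen_inter_nonempty_isMeagre_diff hB
    obtain ⟨a, b, ⟨hax, hxb⟩, habu⟩ := mem_nhds_iff_exists_Ioo_subset.1 (hu.mem_nhds hxu)
    obtain ⟨n, hn, hSn⟩ := exists_nat_ge_not_isMeagre_preimage_mul_inter_Ioo hUnb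
      (le_max_right a 0) ((max_lt hax hxB.1).trans hxb) N
    refine hSn (hmeagre.mono ?_)
    rintro y ⟨hyS, hy⟩
    exact ⟨habu ⟨(le_max_left a 0).trans_lt hy.1, hy.2⟩, fun hyB => mem_iInter₂.1 hyB.2 n hn hyS⟩
  filter_upwards [eventually_countable_forall.2 key] with η hη hη0
  exact frequently_atTop.2 fun N => hη N hη0

end Ordered

theorem stmt_10_general (S : ℕ → Set ℝ)
    (hS : ∀ k, BaireMeasurableSet (S k))
    (hUnb : ∀ k, ∀ m : ℕ, ¬ IsMeagre (S k ∩ Ioi (m : ℝ))) :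
    ∃ N : Set ℝ, IsMeagre N ∧ ∀ η : ℝ, 0 < η → η ∉ N → ∀ k : ℕ,
      ∃ J : Set ℕ, J.Infinite ∧ ∀ n ∈ J, (n : ℝ) * η ∈ S k := by
  have h := eventually_countable_forall.2 fun k =>
    eventually_residual_frequently_nat_mul_mem (hS k) (hUnb k)
  refine ⟨{η | ∀ k, 0 < η → ∃ᶠ n : ℕ in atTop, (n : ℝ) * η ∈ S k}ᶜ,
    by rwa [IsMeagre, compl_compl], fun η hη0 hη k => ?_⟩
  exact ⟨_, Nat.frequently_atTop_iff_infinite.1 (not_not.1 hη k hη0), fun _ => id⟩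

theorem stmt_10 (S : ℕ → Set ℝ) (hS₀ : ∀ k, S k ⊆ Ioi 0)
    (hS : ∀ k, BaireMeasurableSet (S k))
    (hUnb : ∀ k, ∀ m : ℕ, ¬ IsMeagre (S k ∩ Ioi (m : ℝ))) :
    ∃ N : Set ℝ, IsMeagre N ∧ ∀ η : ℝ, 0 < η → η ∉ N → ∀ k : ℕ,
      ∃ J : Set ℕ, J.Infinite ∧ ∀ n ∈ J, (n : ℝ) * η ∈ S k :=
  stmt_10_general S hS hUnb
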